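/- The function E(t, f, τ, l) = ε·C·(R − l)·f² + (e^{l/(τ t)} − 1)·τ t/h is block multi-convex on t > 0, f ≥ 0, τ > 0, 0 ≤ l ≤ R: it is convex in each of the four variables when the other three are held fixed (with ε, C, R, h > 0), but it is not jointly convex in (τ, l, t) in general. -/

import Mathlib

/-!
With `φ = exp - 1`, the transmission energy is `(τ / h) · t φ((l / τ) / t)`, and `t ↦ t φ(a / t)` is
the perspective of the convex function `φ`, hence convex on `t > 0`: at `t = μ x + ν y` the point
`a / t` is the convex combination of `a / x` and `a / y` with weights `μ x / t` and `ν y / t`.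
Since the energy is symmetric in `t` and `τ`, this gives convexity in `τ` too. In `f` and in `l`
the energy is a nonnegative multiple of `f²`, resp. of `exp (l / (τ t))`, plus an affine term.
-/

/-- Total per-user energy: local energy plus transmission energy. -/
noncomputable def Etot (ε C R h : ℝ) (t f τ l : ℝ) : ℝ :=
  ε * C * (R - l) * f ^ 2 + (Real.exp (l / (τ * t)) - 1) * τ * t / h

open Real Set

theorem ConvexOn.perspective {φ : ℝ → ℝ} (hφ : ConvexOn ℝ univ φ) (a : ℝ) :
    ConvexOn ℝ (Ioi 0) fun t => t * φ (a / t) := by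
  refine ⟨convex_Ioi 0, fun x (hx : 0 < x) y (hy : 0 < y) μ ν hμ hν hμν => ?_⟩
  set t := μ * x + ν * y
  have ht : 0 < t := by
    rcases hμ.lt_or_eq with hμ | rfl
    · positivity
    · simp only [zero_add] at hμν; subst hμν; simpa [t] using hy
  have hcomb := hφ.2 (mem_univ (a / x)) (mem_univ (a / y)) (by positivity : 0 ≤ μ * x / t)
    (by positivity : 0 ≤ ν * y / t) (by rw [← add_div, div_self ht.ne'])
  have hpoint : μ * x / t * (a / x) + ν * y / t * (a / y) = a / t := by
    field_simp
    linear_combination a * hμν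
  simp only [smul_eq_mul, hpoint] at hcomb
  calc t * φ (a / t) ≤ t * (μ * x / t * φ (a / x) + ν * y / t * φ (a / y)) := by gcongr
    _ = μ * (x * φ (a / x)) + ν * (y * φ (a / y)) := by field_simp

section

variable {ε C R h : ℝ}

theorem Etot_comm (t f τ l : ℝ) : Etot ε C R h t f τ l = Etot ε C R h τ f t l := by
  simp only [Etot, mul_comm τ t]
  ring

theorem Etot_eq_perspective (t f τ l : ℝ) :
    Etot ε C R h t f τ l = τ / h * (t * (exp (l / τ / t) - 1)) + ε * C * (R - l) * f ^ 2 := by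
  rw [Etot, div_div]
  ring

theorem convexOn_Etot_t {f τ l : ℝ} (hτ : 0 ≤ τ) (hh : 0 ≤ h) :
    ConvexOn ℝ (Ioi 0) fun t => Etot ε C R h t f τ l := by
  simp only [Etot_eq_perspective]
  exact (((convexOn_exp.add_const (-1)).perspective (l / τ)).smul (div_nonneg hτ hh)).add_const _

theorem convexOn_Etot_τ {t f l : ℝ} (ht : 0 ≤ t) (hh : 0 ≤ h) :
    ConvexOn ℝ (Ioi 0) fun τ => Etot ε C R h t f τ l := by
  simpa only [Etot_comm _ _ t] using convexOn_Etot_t (f := f) (l := l) ht hh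

theorem convexOn_Etot_f {t τ l : ℝ} (hε : 0 ≤ ε) (hC : 0 ≤ C) (hl : l ≤ R) :
    ConvexOn ℝ univ fun f => Etot ε C R h t f τ l := by
  have hcoef : 0 ≤ ε * C * (R - l) := mul_nonneg (mul_nonneg hε hC) (sub_nonneg.2 hl)
  exact ((even_two.convexOn_pow).smul hcoef).add_const _

theorem convexOn_Etot_l {t f τ : ℝ} (ht : 0 ≤ t) (hτ : 0 ≤ τ) (hh : 0 ≤ h) :
    ConvexOn ℝ univ fun l => Etot ε C R h t f τ l := by
  have hexp : ConvexOn ℝ univ fun l => exp (l * (τ * t)⁻¹) :=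
    convexOn_exp.comp_linearMap (LinearMap.mulRight ℝ (τ * t)⁻¹)
  have hlin : ConvexOn ℝ univ fun l => -(ε * C * f ^ 2) * l :=
    (LinearMap.mulLeft ℝ (-(ε * C * f ^ 2))).convexOn convex_univ
  refine (((hexp.smul (by positivity : 0 ≤ τ * t / h)).add hlin).add_const
    (ε * C * R * f ^ 2 - τ * t / h)).congr fun l _ => ?_
  simp only [Etot, smul_eq_mul, Pi.add_apply, div_eq_mul_inv]
  ring

end

-- Along the segment from `(τ, l, t) = (1, 0, 1)` to `(3, 72, 3)` the exponent `l / (τ t)` is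
-- `0`, `9`, `8` at the start, midpoint and end, so the midpoint value `4 (e⁹ - 1)` exceeds the
-- average `9 (e⁸ - 1) / 2` of the endpoint values, as `e > 9 / 8`.
theorem not_convexOn_Etot_τlt :
    ¬ ConvexOn ℝ {p : ℝ × ℝ × ℝ | 0 < p.1 ∧ 0 ≤ p.2.1 ∧ p.2.1 ≤ 72 ∧ 0 < p.2.2}
      (fun p => Etot 1 1 72 1 p.2.2 0 p.1 p.2.1) := by
  intro hconv
  have hmid := hconv.2 (x := (1, 0, 1)) (y := (3, 72, 3)) (by norm_num) (by norm_num)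
    (by norm_num : (0 : ℝ) ≤ 1 / 2) (by norm_num : (0 : ℝ) ≤ 1 / 2) (by norm_num)
  have hpt : (1 / 2 : ℝ) • ((1, 0, 1) : ℝ × ℝ × ℝ) + (1 / 2 : ℝ) • (3, 72, 3) = (2, 36, 2) := by
    norm_num [Prod.ext_iff]
  rw [hpt] at hmid
  norm_num [Etot] at hmid
  have he : exp 9 = exp 1 * exp 8 := by rw [← exp_add]; norm_num
  nlinarith [add_one_lt_exp one_ne_zero, exp_pos 8]

theorem energy_block_multiconvex_general
    (ε C R h : ℝ) (hε : 0 < ε) (hC : 0 < C) (hh : 0 < h) :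
    (∀ f ∈ Set.Ici (0 : ℝ), ∀ τ ∈ Set.Ioi (0 : ℝ), ∀ l ∈ Set.Icc (0 : ℝ) R,
      ConvexOn ℝ (Set.Ioi (0 : ℝ)) (fun t => Etot ε C R h t f τ l)) ∧
    (∀ t ∈ Set.Ioi (0 : ℝ), ∀ τ ∈ Set.Ioi (0 : ℝ), ∀ l ∈ Set.Icc (0 : ℝ) R,
      ConvexOn ℝ (Set.Ici (0 : ℝ)) (fun f => Etot ε C R h t f τ l)) ∧
    (∀ t ∈ Set.Ioi (0 : ℝ), ∀ f ∈ Set.Ici (0 : ℝ), ∀ l ∈ Set.Icc (0 : ℝ) R,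
      ConvexOn ℝ (Set.Ioi (0 : ℝ)) (fun τ => Etot ε C R h t f τ l)) ∧
    (∀ t ∈ Set.Ioi (0 : ℝ), ∀ f ∈ Set.Ici (0 : ℝ), ∀ τ ∈ Set.Ioi (0 : ℝ),
      ConvexOn ℝ (Set.Icc (0 : ℝ) R) (fun l => Etot ε C R h t f τ l)) ∧
    (∃ ε' C' R' h' f' : ℝ, 0 < ε' ∧ 0 < C' ∧ 0 < R' ∧ 0 < h' ∧ 0 ≤ f' ∧
      ¬ ConvexOn ℝ
        {p : ℝ × ℝ × ℝ | 0 < p.1 ∧ 0 ≤ p.2.1 ∧ p.2.1 ≤ R' ∧ 0 < p.2.2}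
        (fun p => Etot ε' C' R' h' p.2.2 f' p.1 p.2.1)) :=
  ⟨fun _ _ _ hτ _ _ => convexOn_Etot_t (le_of_lt hτ) hh.le,
    fun _ _ _ _ _ hl => (convexOn_Etot_f hε.le hC.le hl.2).subset (subset_univ _) (convex_Ici 0),
    fun _ ht _ _ _ _ => convexOn_Etot_τ (le_of_lt ht) hh.le,
    fun _ ht _ _ _ hτ =>
      (convexOn_Etot_l (le_of_lt ht) (le_of_lt hτ) hh.le).subset (subset_univ _) (convex_Icc 0 R),
    ⟨1, 1, 72, 1, 0, by norm_num, by norm_num, by norm_num, by norm_num, le_rfl,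
      not_convexOn_Etot_τlt⟩⟩

/-- E(t, f, τ, l) = εC(R-l)f² + (e^{l/(τt)} - 1)τt/h is block multi-convex:
convex in each of t, f, τ, l separately (on t > 0, f ≥ 0, τ > 0, 0 ≤ l ≤ R,
with ε, C, R, h > 0), but not jointly convex in (τ, l, t) in general. -/
theorem energy_block_multiconvex
    (ε C R h : ℝ) (hε : 0 < ε) (hC : 0 < C) (hR : 0 < R) (hh : 0 < h) :
    (∀ f ∈ Set.Ici (0 : ℝ), ∀ τ ∈ Set.Ioi (0 : ℝ), ∀ l ∈ Set.Icc (0 : ℝ) R,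
      ConvexOn ℝ (Set.Ioi (0 : ℝ)) (fun t => Etot ε C R h t f τ l)) ∧
    (∀ t ∈ Set.Ioi (0 : ℝ), ∀ τ ∈ Set.Ioi (0 : ℝ), ∀ l ∈ Set.Icc (0 : ℝ) R,
      ConvexOn ℝ (Set.Ici (0 : ℝ)) (fun f => Etot ε C R h t f τ l)) ∧
    (∀ t ∈ Set.Ioi (0 : ℝ), ∀ f ∈ Set.Ici (0 : ℝ), ∀ l ∈ Set.Icc (0 : ℝ) R,
      ConvexOn ℝ (Set.Ioi (0 : ℝ)) (fun τ => Etot ε C R h t f τ l)) ∧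
    (∀ t ∈ Set.Ioi (0 : ℝ), ∀ f ∈ Set.Ici (0 : ℝ), ∀ τ ∈ Set.Ioi (0 : ℝ),
      ConvexOn ℝ (Set.Icc (0 : ℝ) R) (fun l => Etot ε C R h t f τ l)) ∧
    (∃ ε' C' R' h' f' : ℝ, 0 < ε' ∧ 0 < C' ∧ 0 < R' ∧ 0 < h' ∧ 0 ≤ f' ∧
      ¬ ConvexOn ℝ
        {p : ℝ × ℝ × ℝ | 0 < p.1 ∧ 0 ≤ p.2.1 ∧ p.2.1 ≤ R' ∧ 0 < p.2.2}
        (fun p => Etot ε' C' R' h' p.2.2 f' p.1 p.2.1)) :=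
  energy_block_multiconvex_general ε C R h hε hC hh
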